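/- Let p be an odd prime and k ∈ 𝔽_p. Then the number of triples (x, y, z) ∈ 𝔽_p³ satisfying x² + y² + z² − xyz − 2 = k equals p² + (3 + χ(k + 2))·χ(k − 2)·p + 1, where χ denotes the quadratic character of 𝔽_p (χ(t) = 1 if t is a nonzero square, χ(t) = −1 if t is a nonsquare, χ(0) = 0), and the identity is read in the integers. -/

import Mathlib

set_option linter.unreachableTactic false
set_option linter.unusedTactic false

open Finset

section MarkoffAux
variable {p : ℕ} [Fact p.Prime]

lemma mk_two_ne_zero (hodd : p ≠ 2) : (2 : ZMod p) ≠ 0 := by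
  have : ((2:ℕ) : ZMod p) ≠ 0 := by
    rw [Ne, ZMod.natCast_eq_zero_iff]
    exact fun h => hodd ((Nat.prime_dvd_prime_iff_eq (Fact.out) Nat.prime_two).mp h)
  simpa using this

noncomputable def hypEquiv (hodd : p ≠ 2) (a : ZMod p) (ha : a ≠ 0) :
    {xy : ZMod p × ZMod p // xy.2 ^ 2 = xy.1 ^ 2 + a} ≃ {u : ZMod p // u ≠ 0} where
  toFun s := ⟨s.1.2 + s.1.1, by
    obtain ⟨⟨x, y⟩, h⟩ := s
    intro h0
    simp only at h0 h
    apply ha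
    have hy : y = -x := by linear_combination h0
    rw [hy] at h
    linear_combination -h⟩
  invFun u := ⟨((u.1 - a * u.1⁻¹) / 2, (u.1 + a * u.1⁻¹) / 2), by
    have h2 : (2 : ZMod p) ≠ 0 := mk_two_ne_zero hodd
    have hu : (u : ZMod p) ≠ 0 := u.2
    field_simp
    ring⟩
  left_inv := by
    rintro ⟨⟨x, y⟩, h⟩
    have h2 : (2 : ZMod p) ≠ 0 := mk_two_ne_zero hodd
    have hu : y + x ≠ 0 := by
      intro h0
      apply ha
      have hy : y = -x := by linear_combination h0
      rw [hy] at h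
      linear_combination -h
    simp only at h
    ext <;> simp only
    · field_simp
      first
      | linear_combination h
      | linear_combination -h
      | linear_combination (2 : ZMod p) * h
      | linear_combination (-2 : ZMod p) * h
    · field_simp
      first
      | linear_combination h
      | linear_combination -h
      | linear_combination (2 : ZMod p) * h
      | linear_combination (-2 : ZMod p) * h
  right_inv := by
    rintro ⟨u, hu⟩
    have h2 : (2 : ZMod p) ≠ 0 := mk_two_ne_zero hodd
    ext
    simp only
    field_simp
    ring


lemma sumsq : ∑ y : ZMod p, (quadraticChar (ZMod p) (y ^ 2) : ℤ) = (p : ℤ) - 1 := by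
  have h : ∀ y : ZMod p, (quadraticChar (ZMod p) (y ^ 2) : ℤ) = if y = 0 then 0 else 1 := by
    intro y
    by_cases hy : y = 0
    · simp [hy]
    · simp [hy, quadraticChar_sq_one' hy]
  rw [Finset.sum_congr rfl fun y _ => h y, Finset.sum_ite, Finset.sum_const, Finset.sum_const]
  have hc : (Finset.univ.filter fun y : ZMod p => ¬ y = 0).card = p - 1 := by
    rw [Finset.filter_not, Finset.filter_eq']
    simp [Finset.card_sdiff, ZMod.card]
  rw [hc]
  have hp : 1 ≤ p := (Fact.out : p.Prime).one_lt.le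
  simp
  omega

lemma cardsq (hodd : p ≠ 2) (a : ZMod p) :
    (Fintype.card {x : ZMod p // x ^ 2 = a} : ℤ) = quadraticChar (ZMod p) a + 1 := by
  have hchar : ringChar (ZMod p) ≠ 2 := by rw [ZMod.ringChar_zmod_n]; exact hodd
  have h := quadraticChar_card_sqrts hchar a
  rw [← h, Set.toFinset_card]
  rfl

lemma key_sum (hodd : p ≠ 2) (a : ZMod p) (ha : a ≠ 0) :
    ∑ x : ZMod p, (quadraticChar (ZMod p) (x ^ 2 + a) : ℤ) = -1 := by
  have h1 : ∀ x : ZMod p, (quadraticChar (ZMod p) (x ^ 2 + a) : ℤ)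
      = (Fintype.card {y : ZMod p // y ^ 2 = x ^ 2 + a} : ℤ) - 1 := by
    intro x; rw [cardsq hodd]; ring
  rw [Finset.sum_congr rfl fun x _ => h1 x, Finset.sum_sub_distrib]
  have h2 : ∑ x : ZMod p, (Fintype.card {y : ZMod p // y ^ 2 = x ^ 2 + a} : ℤ)
      = (Fintype.card {xy : ZMod p × ZMod p // xy.2 ^ 2 = xy.1 ^ 2 + a} : ℤ) := by
    rw [Fintype.card_congr (Equiv.subtypeProdEquivSigmaSubtype fun x y : ZMod p => y ^ 2 = x ^ 2 + a),
      Fintype.card_sigma]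
    push_cast
    rfl
  have h3 : Fintype.card {xy : ZMod p × ZMod p // xy.2 ^ 2 = xy.1 ^ 2 + a} = p - 1 := by
    rw [Fintype.card_congr (hypEquiv hodd a ha)]
    rw [Fintype.card_subtype_compl, Fintype.card_subtype_eq (0 : ZMod p), ZMod.card]
  rw [h2, h3]
  have hp : 1 ≤ p := (Fact.out : p.Prime).one_lt.le
  simp [ZMod.card]
  push_cast [Nat.cast_sub hp]
  ring

lemma inner_sq (A : ZMod p) :
    ∑ y : ZMod p, (quadraticChar (ZMod p) (A * y ^ 2) : ℤ)
      = quadraticChar (ZMod p) A * ((p : ℤ) - 1) := by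
  have : ∀ y : ZMod p, (quadraticChar (ZMod p) (A * y ^ 2) : ℤ)
      = quadraticChar (ZMod p) A * quadraticChar (ZMod p) (y ^ 2) := by
    intro y; rw [map_mul]
  rw [Finset.sum_congr rfl fun y _ => this y, ← Finset.mul_sum, sumsq]

lemma inner_gen (hodd : p ≠ 2) (A b : ZMod p) (hA : A ≠ 0) (hb : b ≠ 0) :
    ∑ y : ZMod p, (quadraticChar (ZMod p) (A * y ^ 2 + b) : ℤ)
      = -quadraticChar (ZMod p) A := by
  have hba : b * A⁻¹ ≠ 0 := mul_ne_zero hb (inv_ne_zero hA)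
  have : ∀ y : ZMod p, (quadraticChar (ZMod p) (A * y ^ 2 + b) : ℤ)
      = quadraticChar (ZMod p) A * quadraticChar (ZMod p) (y ^ 2 + b * A⁻¹) := by
    intro y
    have hh : A * (y ^ 2 + b * A⁻¹) = A * y ^ 2 + b := by
      field_simp
    rw [← hh, map_mul]
  rw [Finset.sum_congr rfl fun y _ => this y, ← Finset.mul_sum, key_sum hodd _ hba]
  ring

lemma fiber_count (hodd : p ≠ 2) (k x y : ZMod p) :
    (Fintype.card {z : ZMod p // x ^ 2 + y ^ 2 + z ^ 2 - x * y * z - 2 = k} : ℤ)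
      = quadraticChar (ZMod p) ((x * y) ^ 2 - 4 * (x ^ 2 + y ^ 2 - 2 - k)) + 1 := by
  have h2 : (2 : ZMod p) ≠ 0 := mk_two_ne_zero hodd
  rw [← cardsq hodd]
  congr 1
  apply Fintype.card_congr
  exact {
    toFun := fun z => ⟨2 * z.1 - x * y, by
      have h := z.2
      linear_combination (4 : ZMod p) * h⟩
    invFun := fun w => ⟨(w.1 + x * y) / 2, by
      have h := w.2
      field_simp
      first
      | linear_combination h
      | linear_combination (2 : ZMod p) * h
      | linear_combination (4 : ZMod p) * h
      | linear_combination -h⟩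
    left_inv := fun z => by
      ext
      simp only
      first
      | (field_simp; ring)
      | field_simp
      | ring
    right_inv := fun w => by
      ext
      simp only
      first
      | (field_simp; ring)
      | field_simp
      | ring }

lemma sqrt_boole (hodd : p ≠ 2) (a : ZMod p) :
    ∑ x : ZMod p, (if x ^ 2 = a then (1 : ℤ) else 0)
      = quadraticChar (ZMod p) a + 1 := by
  rw [Finset.sum_boole, ← cardsq hodd a, Fintype.card_subtype]

lemma chi_four (hodd : p ≠ 2) : (quadraticChar (ZMod p) (4 : ZMod p) : ℤ) = 1 := by
  have h2 : (2 : ZMod p) ≠ 0 := mk_two_ne_zero hodd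
  have : (4 : ZMod p) = 2 ^ 2 := by norm_num
  rw [this, quadraticChar_sq_one' h2]

lemma per_x (hodd : p ≠ 2) (k x : ZMod p) :
    ∑ y : ZMod p, (quadraticChar (ZMod p) ((x * y) ^ 2 - 4 * (x ^ 2 + y ^ 2 - 2 - k)) : ℤ)
      = -quadraticChar (ZMod p) (x ^ 2 - 4)
        + (p : ℤ) * quadraticChar (ZMod p) (k - 2) *
          ((if x ^ 2 = 4 then (1:ℤ) else 0) + (if x ^ 2 = k + 2 then (1:ℤ) else 0)) := by
  have h2 : (2 : ZMod p) ≠ 0 := mk_two_ne_zero hodd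
  have h4 : (4 : ZMod p) ≠ 0 := by
    intro h
    apply h2
    have : (4 : ZMod p) = 2 * 2 := by norm_num
    rw [this] at h
    exact (mul_self_eq_zero.mp h)
  have hrw : ∀ y : ZMod p, (x * y) ^ 2 - 4 * (x ^ 2 + y ^ 2 - 2 - k)
      = (x ^ 2 - 4) * y ^ 2 + 4 * (k + 2 - x ^ 2) := fun y => by ring
  rw [Finset.sum_congr rfl fun y _ => by rw [hrw y]]
  by_cases h4x : x ^ 2 = 4 <;> by_cases hkx : x ^ 2 = k + 2
  · -- both: k = 2
    have hk2 : k - 2 = 0 := by linear_combination h4x - hkx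
    have hA : x ^ 2 - 4 = 0 := by rw [h4x]; ring
    have hB : (4 : ZMod p) * (k + 2 - x ^ 2) = 0 := by rw [← hkx]; ring
    have hs : ∀ y : ZMod p, (x ^ 2 - 4) * y ^ 2 + 4 * (k + 2 - x ^ 2) = 0 := by
      intro y; rw [hA, hB]; ring
    rw [Finset.sum_congr rfl fun y _ => by rw [hs y], if_pos h4x, if_pos hkx, hA, hk2]
    simp
  · -- x² = 4, x² ≠ k+2
    have hA : x ^ 2 - 4 = 0 := by rw [h4x]; ring
    have hB : (4 : ZMod p) * (k + 2 - x ^ 2) = 4 * (k - 2) := by rw [h4x]; ring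
    have hs : ∀ y : ZMod p, (x ^ 2 - 4) * y ^ 2 + 4 * (k + 2 - x ^ 2) = 4 * (k - 2) := by
      intro y; rw [hA, hB]; ring
    have hchi : (quadraticChar (ZMod p) (4 * (k - 2)) : ℤ)
        = quadraticChar (ZMod p) (k - 2) := by
      rw [map_mul]
      push_cast
      rw [chi_four hodd]
      ring
    rw [Finset.sum_congr rfl fun y _ => by rw [hs y], Finset.sum_const,
      if_pos h4x, if_neg hkx, hA]
    rw [Finset.card_univ, ZMod.card, nsmul_eq_mul, hchi]
    simp
  · -- x² = k+2 ≠ 4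
    have hB : (4 : ZMod p) * (k + 2 - x ^ 2) = 0 := by rw [← hkx]; ring
    have hA : x ^ 2 - 4 = k - 2 := by rw [hkx]; ring
    have hs : ∀ y : ZMod p, (x ^ 2 - 4) * y ^ 2 + 4 * (k + 2 - x ^ 2) = (k-2) * y ^ 2 := by
      intro y; rw [hA, hB]; ring
    rw [Finset.sum_congr rfl fun y _ => by rw [hs y], inner_sq,
      if_neg h4x, if_pos hkx, hA]
    ring
  · -- generic
    have hA : x ^ 2 - 4 ≠ 0 := fun h => h4x (by linear_combination h)
    have hB : (4 : ZMod p) * (k + 2 - x ^ 2) ≠ 0 := by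
      apply mul_ne_zero h4
      intro h
      exact hkx (by linear_combination -h)
    rw [inner_gen hodd _ _ hA hB, if_neg h4x, if_neg hkx]
    ring

lemma outer (hodd : p ≠ 2) (k : ZMod p) :
    ∑ x : ZMod p, ∑ y : ZMod p,
        (quadraticChar (ZMod p) ((x * y) ^ 2 - 4 * (x ^ 2 + y ^ 2 - 2 - k)) : ℤ)
      = 1 + (p : ℤ) * quadraticChar (ZMod p) (k - 2)
          * (3 + quadraticChar (ZMod p) (k + 2)) := by
  have h2 : (2 : ZMod p) ≠ 0 := mk_two_ne_zero hodd
  have h4n : (-4 : ZMod p) ≠ 0 := by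
    intro h
    apply h2
    have h4 : (4 : ZMod p) = 0 := by linear_combination -h
    have : (4 : ZMod p) = 2 * 2 := by norm_num
    rw [this] at h4
    exact mul_self_eq_zero.mp h4
  rw [Finset.sum_congr rfl fun x _ => per_x hodd k x]
  rw [Finset.sum_add_distrib, Finset.sum_neg_distrib]
  have hk1 : ∑ x : ZMod p, (quadraticChar (ZMod p) (x ^ 2 - 4) : ℤ) = -1 := by
    rw [Finset.sum_congr rfl fun x _ => by rw [sub_eq_add_neg]]
    exact key_sum hodd _ h4n
  rw [hk1, ← Finset.mul_sum, Finset.sum_add_distrib, sqrt_boole hodd, sqrt_boole hodd,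
    chi_four hodd]
  ring

end MarkoffAux

theorem markoff_level_count (p : ℕ) [Fact p.Prime] (hodd : p ≠ 2) (k : ZMod p) :
    (Nat.card {t : ZMod p × ZMod p × ZMod p //
        t.1 ^ 2 + t.2.1 ^ 2 + t.2.2 ^ 2 - t.1 * t.2.1 * t.2.2 - 2 = k} : ℤ) =
      (p : ℤ) ^ 2 +
        (3 + quadraticChar (ZMod p) (k + 2)) * quadraticChar (ZMod p) (k - 2) * (p : ℤ) + 1 := by
  classical
  have hx : ∀ x : ZMod p,
      (Fintype.card {yz : ZMod p × ZMod p //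
          x ^ 2 + yz.1 ^ 2 + yz.2 ^ 2 - x * yz.1 * yz.2 - 2 = k} : ℤ)
        = ∑ y : ZMod p,
            ((quadraticChar (ZMod p) ((x * y) ^ 2 - 4 * (x ^ 2 + y ^ 2 - 2 - k)) : ℤ) + 1) := by
    intro x
    rw [Fintype.card_congr (Equiv.subtypeProdEquivSigmaSubtype
      (fun (y z : ZMod p) => x ^ 2 + y ^ 2 + z ^ 2 - x * y * z - 2 = k)),
      Fintype.card_sigma]
    push_cast
    exact Finset.sum_congr rfl fun y _ => fiber_count hodd k x y
  have hcard : (Nat.card {t : ZMod p × ZMod p × ZMod p //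
        t.1 ^ 2 + t.2.1 ^ 2 + t.2.2 ^ 2 - t.1 * t.2.1 * t.2.2 - 2 = k} : ℤ)
      = ∑ x : ZMod p, ∑ y : ZMod p,
          ((quadraticChar (ZMod p) ((x * y) ^ 2 - 4 * (x ^ 2 + y ^ 2 - 2 - k)) : ℤ) + 1) := by
    rw [Nat.card_eq_fintype_card,
      Fintype.card_congr (Equiv.subtypeProdEquivSigmaSubtype
        (fun (x : ZMod p) (yz : ZMod p × ZMod p) =>
          x ^ 2 + yz.1 ^ 2 + yz.2 ^ 2 - x * yz.1 * yz.2 - 2 = k)),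
      Fintype.card_sigma]
    push_cast
    exact Finset.sum_congr rfl fun x _ => hx x
  rw [hcard]
  have hsplit : ∑ x : ZMod p, ∑ y : ZMod p,
      ((quadraticChar (ZMod p) ((x * y) ^ 2 - 4 * (x ^ 2 + y ^ 2 - 2 - k)) : ℤ) + 1)
      = (∑ x : ZMod p, ∑ y : ZMod p,
          (quadraticChar (ZMod p) ((x * y) ^ 2 - 4 * (x ^ 2 + y ^ 2 - 2 - k)) : ℤ)) + (p : ℤ) ^ 2 := by
    simp [Finset.sum_add_distrib, ZMod.card]
    ring
  rw [hsplit, outer hodd k]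
  ring
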